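/- arXiv:2508.00623 — 3 statements merged into one kernel-verified Lean document; each statement's English description precedes it below -/
import Mathlib

section
/- Let Ω ⊆ ℂ be a connected open set and let h₁, h₂ : Ω → ℂ be analytic functions satisfying |h₂(z)|² = 1 + |h₁(z)|² for all z ∈ Ω. Then h₁ and h₂ are both constant. -/
/-!
The quantity `u z = h₂ z · conj (h₂ z₀) - h₁ z · conj (h₁ z₀)` is the Hermitian form of signature
`(1, 1)` evaluated at two points of the hyperboloid `|w₂|² - |w₁|² = 1`. The reverse Cauchy–Schwarz
inequality for that form gives `1 ≤ |u|` on `Ω`, with `u z₀ = 1`. By the minimum modulus principle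
the holomorphic function `u` is constant, so equality holds in reverse Cauchy–Schwarz everywhere,
which forces `|h₁ z| = |h₁ z₀|`. Holomorphic functions of constant modulus are constant.
-/

open Set Function ComplexConjugate

namespace Complex

variable {E : Type*} [NormedAddCommGroup E] [NormedSpace ℂ E] {f : E → ℂ} {U : Set E} {c : E}

theorem eqOn_of_isPreconnected_of_isMinOn_norm (hU : IsPreconnected U) (ho : IsOpen U)
    (hd : DifferentiableOn ℂ f U) (hf : ∀ z ∈ U, f z ≠ 0) (hc : c ∈ U)
    (hmin : IsMinOn (norm ∘ f) U c) : EqOn f (const E (f c)) U := by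
  have hinv : EqOn f⁻¹ (const E (f c)⁻¹) U := by
    refine eqOn_of_isPreconnected_of_isMaxOn_norm hU ho (hd.inv hf) hc fun z hz => ?_
    simpa only [mem_ofPred_eq, comp_apply, Pi.inv_apply, norm_inv] using
      inv_anti₀ (norm_pos_iff.2 (hf c hc)) (hmin hz)
  exact fun z hz => inv_injective (hinv hz)

theorem eqOn_of_isPreconnected_of_norm_eq (hU : IsPreconnected U) (ho : IsOpen U)
    (hd : DifferentiableOn ℂ f U) (hc : c ∈ U) (h : ∀ z ∈ U, ‖f z‖ = ‖f c‖) :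
    EqOn f (const E (f c)) U :=
  eqOn_of_isPreconnected_of_isMaxOn_norm hU ho hd hc fun z hz => (h z hz).le

end Complex

section ReverseCauchySchwarz

variable {x y X Y : ℝ}

theorem mul_sub_mul_sq_eq_one_add_sq (hx : X ^ 2 = 1 + x ^ 2) (hy : Y ^ 2 = 1 + y ^ 2) :
    (X * Y - x * y) ^ 2 = 1 + (X * y - x * Y) ^ 2 := by
  linear_combination (Y ^ 2 - y ^ 2) * hx + hy

theorem one_le_mul_sub_mul_of_sq_eq_one_add_sq (hX : 0 ≤ X) (hY : 0 ≤ Y)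
    (hx : X ^ 2 = 1 + x ^ 2) (hy : Y ^ 2 = 1 + y ^ 2) : 1 ≤ X * Y - x * y := by
  have hxX : |x| ≤ X := abs_le_of_sq_le_sq (by linarith [sq_nonneg x]) hX
  have hyY : |y| ≤ Y := abs_le_of_sq_le_sq (by linarith [sq_nonneg y]) hY
  have hxy : x * y ≤ X * Y := calc
    x * y ≤ |x| * |y| := abs_mul x y ▸ le_abs_self _
    _ ≤ X * Y := mul_le_mul hxX hyY (abs_nonneg _) hX
  nlinarith [mul_sub_mul_sq_eq_one_add_sq hx hy, sq_nonneg (X * y - x * Y)]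

theorem eq_of_mul_sub_mul_eq_one (hx : X ^ 2 = 1 + x ^ 2) (hy : Y ^ 2 = 1 + y ^ 2)
    (h : X * Y - x * y = 1) : x = y := by
  have hcross : X * y = x * Y := by
    nlinarith [mul_sub_mul_sq_eq_one_add_sq hx hy, sq_nonneg (X * y - x * Y)]
  linear_combination -X * hcross + y * hx - x * h

end ReverseCauchySchwarz

section Hyperboloid

variable {a₁ a₂ b₁ b₂ : ℂ}

theorem mul_conj_sub_mul_conj_self (ha : ‖a₂‖ ^ 2 = 1 + ‖a₁‖ ^ 2) :
    a₂ * conj a₂ - a₁ * conj a₁ = 1 := by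
  rw [Complex.mul_conj', Complex.mul_conj', ← Complex.ofReal_pow, ← Complex.ofReal_pow, ha]
  push_cast
  ring

theorem norm_mul_sub_norm_mul_le_norm_mul_conj_sub_mul_conj :
    ‖a₂‖ * ‖b₂‖ - ‖a₁‖ * ‖b₁‖ ≤ ‖a₂ * conj b₂ - a₁ * conj b₁‖ := by
  simpa only [norm_mul, Complex.norm_conj] using norm_sub_norm_le (a₂ * conj b₂) (a₁ * conj b₁)

theorem one_le_norm_mul_conj_sub_mul_conj (ha : ‖a₂‖ ^ 2 = 1 + ‖a₁‖ ^ 2)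
    (hb : ‖b₂‖ ^ 2 = 1 + ‖b₁‖ ^ 2) : 1 ≤ ‖a₂ * conj b₂ - a₁ * conj b₁‖ :=
  (one_le_mul_sub_mul_of_sq_eq_one_add_sq (norm_nonneg _) (norm_nonneg _) ha hb).trans
    norm_mul_sub_norm_mul_le_norm_mul_conj_sub_mul_conj

theorem norm_eq_of_norm_mul_conj_sub_mul_conj_eq_one (ha : ‖a₂‖ ^ 2 = 1 + ‖a₁‖ ^ 2)
    (hb : ‖b₂‖ ^ 2 = 1 + ‖b₁‖ ^ 2) (h : ‖a₂ * conj b₂ - a₁ * conj b₁‖ = 1) : ‖a₁‖ = ‖b₁‖ := by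
  refine eq_of_mul_sub_mul_eq_one ha hb (le_antisymm ?_ ?_)
  · exact h ▸ norm_mul_sub_norm_mul_le_norm_mul_conj_sub_mul_conj
  · exact one_le_mul_sub_mul_of_sq_eq_one_add_sq (norm_nonneg _) (norm_nonneg _) ha hb

end Hyperboloid

/-- If `h₁, h₂` are holomorphic on a connected open set `Ω` and
`|h₂ z|² = 1 + |h₁ z|²` on `Ω`, then `h₁` and `h₂` are both constant. -/
theorem holomorphic_pair_modulus_relation_const {Ω : Set ℂ} (hΩo : IsOpen Ω)
    (hΩc : IsConnected Ω) (h₁ h₂ : ℂ → ℂ)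
    (hh₁ : DifferentiableOn ℂ h₁ Ω) (hh₂ : DifferentiableOn ℂ h₂ Ω)
    (hrel : ∀ z ∈ Ω, ‖h₂ z‖ ^ 2 = 1 + ‖h₁ z‖ ^ 2) :
    (∃ a : ℂ, ∀ z ∈ Ω, h₁ z = a) ∧ (∃ b : ℂ, ∀ z ∈ Ω, h₂ z = b) := by
  obtain ⟨z₀, hz₀⟩ := hΩc.nonempty
  set u : ℂ → ℂ := fun z => h₂ z * conj (h₂ z₀) - h₁ z * conj (h₁ z₀)
  have hu_ge : ∀ z ∈ Ω, 1 ≤ ‖u z‖ := fun z hz =>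
    one_le_norm_mul_conj_sub_mul_conj (hrel z hz) (hrel z₀ hz₀)
  have hu₀ : u z₀ = 1 := mul_conj_sub_mul_conj_self (hrel z₀ hz₀)
  have hu_const : EqOn u (const ℂ (u z₀)) Ω :=
    Complex.eqOn_of_isPreconnected_of_isMinOn_norm hΩc.isPreconnected hΩo
      ((hh₂.mul_const _).sub (hh₁.mul_const _))
      (fun z hz => norm_pos_iff.1 (one_pos.trans_le (hu_ge z hz))) hz₀
      (fun z hz => by simpa only [mem_ofPred_eq, comp_apply, hu₀, norm_one] using hu_ge z hz)
  have hnorm₁ : ∀ z ∈ Ω, ‖h₁ z‖ = ‖h₁ z₀‖ := fun z hz =>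
    norm_eq_of_norm_mul_conj_sub_mul_conj_eq_one (hrel z hz) (hrel z₀ hz₀)
      (show ‖u z‖ = 1 by rw [hu_const hz, const_apply, hu₀, norm_one])
  have hnorm₂ : ∀ z ∈ Ω, ‖h₂ z‖ = ‖h₂ z₀‖ := fun z hz =>
    (sq_eq_sq₀ (norm_nonneg _) (norm_nonneg _)).1 (by rw [hrel z hz, hrel z₀ hz₀, hnorm₁ z hz])
  exact ⟨⟨h₁ z₀, Complex.eqOn_of_isPreconnected_of_norm_eq hΩc.isPreconnected hΩo hh₁ hz₀ hnorm₁⟩,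
    ⟨h₂ z₀, Complex.eqOn_of_isPreconnected_of_norm_eq hΩc.isPreconnected hΩo hh₂ hz₀ hnorm₂⟩⟩
end

section
/- Let Ω ⊆ ℂ be a connected open set, m₀ ∈ ℂ with |m₀| ≠ 1, and let w₁, w₃ : Ω → ℂ be analytic with 1 - |m₀|² + c|w₃(z)|² = |w₁(z)|² for all z ∈ Ω, where c > 0 is a real constant and w₁ is nonvanishing. Then w₃ is constant (and hence w₁ has constant modulus). -/
/-!
Write `k = 1 - ‖m₀‖²`, so `w₁ w̄₁ - c w₃ w̄₃ = k` on `Ω`. Applying `∂` and then `∂̄` to this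
identity (the `w`'s being holomorphic) gives `w₁' w̄₁ = c w₃' w̄₃` and `|w₁'|² = c |w₃'|²`.
Where `w₃' ≠ 0`, dividing the square of the first identity by the second gives
`|w₁|² = c |w₃|²`, i.e. `k = 0`, which `‖m₀‖ ≠ 1` forbids. Hence `w₃' = 0` on the connected
set `Ω`, and `w₃` is constant.
-/

open Complex ComplexConjugate

theorem eq_zero_of_forall_mul_add_conj_mul_eq_zero {A B : ℂ}
    (h : ∀ d : ℂ, d * A + conj d * B = 0) : A = 0 ∧ B = 0 := by
  have h₁ := h 1
  have hI := h I
  simp only [map_one, one_mul, conj_I] at h₁ hI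
  have hAB : A - B = 0 := mul_left_cancel₀ I_ne_zero (by linear_combination hI)
  exact ⟨by linear_combination (h₁ + hAB) / 2, by linear_combination (h₁ - hAB) / 2⟩

theorem hasDerivAt_line_mul_conj {f p : ℂ → ℂ} {z : ℂ} (d : ℂ)
    (hf : DifferentiableAt ℂ f z) (hp : DifferentiableAt ℂ p z) :
    HasDerivAt (fun t : ℝ => f (z + t * d) * conj (p (z + t * d)))
      (d * (deriv f z * conj (p z)) + conj d * (f z * conj (deriv p z))) 0 := by
  have hline : HasDerivAt (fun t : ℝ => z + t * d) d 0 := by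
    simpa using ((hasDerivAt_id (0 : ℝ)).ofReal_comp.mul_const d).const_add z
  have hz : z + ((0 : ℝ) : ℂ) * d = z := by simp
  have hf' : HasDerivAt (fun t : ℝ => f (z + t * d)) (deriv f z * d) 0 :=
    hf.hasDerivAt.comp_of_eq (0 : ℝ) hline hz.symm
  have hp' : HasDerivAt (fun t : ℝ => conj (p (z + t * d))) (conj (deriv p z * d)) 0 :=
    (hp.hasDerivAt.comp_of_eq (0 : ℝ) hline hz.symm).star
  refine (hf'.mul hp').congr_deriv ?_
  simp only [ofReal_zero, zero_mul, add_zero, map_mul]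
  ring

theorem deriv_mul_conj_eq_of_eqOn_const {Ω : Set ℂ} (hΩ : IsOpen Ω) {f p g q : ℂ → ℂ}
    (hf : DifferentiableOn ℂ f Ω) (hp : DifferentiableOn ℂ p Ω)
    (hg : DifferentiableOn ℂ g Ω) (hq : DifferentiableOn ℂ q Ω) (c k : ℂ)
    (hconst : ∀ z ∈ Ω, f z * conj (p z) - c * (g z * conj (q z)) = k) {z : ℂ} (hz : z ∈ Ω) :
    deriv f z * conj (p z) = c * (deriv g z * conj (q z)) ∧
      f z * conj (deriv p z) = c * (g z * conj (deriv q z)) := by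
  have hΩz := hΩ.mem_nhds hz
  have hderiv : ∀ d : ℂ,
      d * (deriv f z * conj (p z) - c * (deriv g z * conj (q z)))
        + conj d * (f z * conj (deriv p z) - c * (g z * conj (deriv q z))) = 0 := by
    intro d
    have hline : ∀ᶠ t : ℝ in nhds 0, z + t * d ∈ Ω :=
      (by fun_prop : Continuous fun t : ℝ => z + t * d).continuousAt.eventually_mem
        (by simpa using hΩz)
    have hF := (hasDerivAt_line_mul_conj d (hf.differentiableAt hΩz) (hp.differentiableAt hΩz)).sub
      ((hasDerivAt_line_mul_conj d (hg.differentiableAt hΩz) (hq.differentiableAt hΩz)).const_mul c)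
    have hk : HasDerivAt (fun t : ℝ => f (z + t * d) * conj (p (z + t * d))
        - c * (g (z + t * d) * conj (q (z + t * d)))) 0 0 :=
      (hasDerivAt_const (0 : ℝ) k).congr_of_eventuallyEq
        (hline.mono fun t ht => hconst _ ht)
    linear_combination hF.unique hk
  obtain ⟨h₁, h₂⟩ := eq_zero_of_forall_mul_add_conj_mul_eq_zero hderiv
  exact ⟨sub_eq_zero.1 h₁, sub_eq_zero.1 h₂⟩

theorem norm_sq_eq_mul_norm_sq_of_mul_conj_eq {a₀ a₁ b₀ b₁ : ℂ} {c : ℝ} (hc : 0 < c)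
    (hb₁ : b₁ ≠ 0) (h₀ : a₁ * conj a₀ = c * (b₁ * conj b₀))
    (h₁ : a₁ * conj a₁ = c * (b₁ * conj b₁)) : ‖a₀‖ ^ 2 = c * ‖b₀‖ ^ 2 := by
  have hn₀ := congrArg norm h₀
  have hn₁ := congrArg norm h₁
  simp only [norm_mul, norm_conj, norm_real, Real.norm_of_nonneg hc.le] at hn₀ hn₁
  have hcb : c * ‖b₁‖ ^ 2 ≠ 0 := by positivity
  refine mul_left_cancel₀ hcb ?_
  linear_combination (‖a₁‖ * ‖a₀‖ + c * (‖b₁‖ * ‖b₀‖)) * hn₀ - ‖a₀‖ ^ 2 * hn₁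

theorem holomorphic_w3_const_general {Ω : Set ℂ} (hΩo : IsOpen Ω) (hΩc : IsConnected Ω)
    (w₁ w₃ : ℂ → ℂ) (hw₁ : DifferentiableOn ℂ w₁ Ω) (hw₃ : DifferentiableOn ℂ w₃ Ω)
    (m₀ : ℂ) (hm₀ : ‖m₀‖ ≠ 1)
    (c : ℝ) (hc : 0 < c)
    (heq : ∀ z ∈ Ω,
      1 - ‖m₀‖ ^ 2 + c * ‖w₃ z‖ ^ 2 = ‖w₁ z‖ ^ 2) :
    (∃ a : ℂ, ∀ z ∈ Ω, w₃ z = a) ∧ (∃ ρ : ℝ, ∀ z ∈ Ω, ‖w₁ z‖ = ρ) := by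
  have hconst : ∀ z ∈ Ω, w₁ z * conj (w₁ z) - c * (w₃ z * conj (w₃ z)) = (1 - ‖m₀‖ ^ 2 : ℝ) :=
    fun z hz => by
      simp only [mul_conj, normSq_eq_norm_sq, ← heq z hz]
      push_cast
      ring
  have hd₁ : ∀ z ∈ Ω, deriv w₁ z * conj (w₁ z) = c * (deriv w₃ z * conj (w₃ z)) := fun z hz =>
    (deriv_mul_conj_eq_of_eqOn_const hΩo hw₁ hw₁ hw₃ hw₃ _ _ hconst hz).1
  have hd₂ : ∀ z ∈ Ω, deriv w₁ z * conj (deriv w₁ z) = c * (deriv w₃ z * conj (deriv w₃ z)) :=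
    fun z hz => (deriv_mul_conj_eq_of_eqOn_const hΩo (hw₁.deriv hΩo) hw₁ (hw₃.deriv hΩo) hw₃ _ 0
      (fun z hz => by rw [hd₁ z hz, sub_self]) hz).2
  have hw₃' : Ω.EqOn (deriv w₃) 0 := fun z hz => by
    by_contra hz₃
    have := norm_sq_eq_mul_norm_sq_of_mul_conj_eq hc hz₃ (hd₁ z hz) (hd₂ z hz)
    have hm₀' : ‖m₀‖ ^ 2 = 1 := by linarith [heq z hz]
    exact hm₀ ((pow_eq_one_iff_of_nonneg (norm_nonneg _) two_ne_zero).1 hm₀')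
  obtain ⟨a, ha⟩ := hΩo.exists_is_const_of_deriv_eq_zero hΩc.isPreconnected hw₃ hw₃'
  refine ⟨⟨a, ha⟩, √(1 - ‖m₀‖ ^ 2 + c * ‖a‖ ^ 2), fun z hz => ?_⟩
  rw [← ha z hz, heq z hz, Real.sqrt_sq (norm_nonneg _)]

/-- If `w₁, w₃` are holomorphic on a connected open set `Ω`, `w₁` is nonvanishing,
`c > 0`, `|m₀| ≠ 1`, the quantity `1 - |m₀|² + c|w₃|²` is positive, and
`1 - |m₀|² + c|w₃ z|² = |w₁ z|²` on `Ω`, then `w₃` is constant (and hence `w₁`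
has constant modulus). -/
theorem holomorphic_w3_const {Ω : Set ℂ} (hΩo : IsOpen Ω) (hΩc : IsConnected Ω)
    (w₁ w₃ : ℂ → ℂ) (hw₁ : DifferentiableOn ℂ w₁ Ω) (hw₃ : DifferentiableOn ℂ w₃ Ω)
    (hne : ∀ z ∈ Ω, w₁ z ≠ 0) (m₀ : ℂ) (hm₀ : ‖m₀‖ ≠ 1)
    (c : ℝ) (hc : 0 < c)
    (hpos : ∀ z ∈ Ω, 0 < 1 - ‖m₀‖ ^ 2 + c * ‖w₃ z‖ ^ 2)
    (heq : ∀ z ∈ Ω,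
      1 - ‖m₀‖ ^ 2 + c * ‖w₃ z‖ ^ 2 = ‖w₁ z‖ ^ 2) :
    (∃ a : ℂ, ∀ z ∈ Ω, w₃ z = a) ∧ (∃ ρ : ℝ, ∀ z ∈ Ω, ‖w₁ z‖ = ρ) :=
  holomorphic_w3_const_general hΩo hΩc w₁ w₃ hw₁ hw₃ m₀ hm₀ c hc heq
end

section
/- Let Ω ⊆ ℂ be open and connected and q₁ : Ω → ℂ holomorphic with 0 < |q₁(z)| < 1. Suppose m₁, m₂ : Ω → ℂ are holomorphic, m₁ nonvanishing, and |m₁(z)|² − |m₂(z)|² = 1 − |q₁(z)|² on Ω. If q₁ is a nonzero constant c₀, then m₁ and m₂ are both constant. -/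
/-!
Write `c = 1 - |c₀|² > 0`, so that `conj m₁ · m₁ - conj m₂ · m₂ = c` on `Ω`. Applying `∂` gives
`conj m₁ · m₁' = conj m₂ · m₂'`, and applying `∂̄` to that gives `|m₁'|² = |m₂'|²`. Taking norms,
`|m₁| |m₁'| = |m₂| |m₁'|`, while `|m₁|² - |m₂|² = c > 0` forces `|m₂| < |m₁|`, so `m₁' = m₂' = 0`
and both functions are constant on the connected set `Ω`.
-/

open Complex ComplexConjugate Filter Topology

variable {Ω : Set ℂ} {f g f₁ g₁ f₂ g₂ : ℂ → ℂ} {z c f' g' : ℂ}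

theorem exists_hasFDerivAt_conj_mul (hf : HasDerivAt f f' z) (hg : HasDerivAt g g' z) :
    ∃ D : ℂ →L[ℝ] ℂ, HasFDerivAt (fun w => conj (f w) * g w) D z ∧
      ∀ v, D v = conj (f z) * g' * v + conj f' * g z * conj v := by
  refine ⟨_, (hf.hasFDerivAt.restrictScalars ℝ).star.mul (hg.hasFDerivAt.restrictScalars ℝ), ?_⟩
  intro v
  simp only [RCLike.star_def, add_apply, smul_apply, ContinuousLinearMap.coe_restrictScalars',
    ContinuousLinearMap.toSpanSingleton_apply, smul_eq_mul, ContinuousLinearMap.comp_apply,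
    ContinuousLinearEquiv.coe_coe, starL'_apply, star_mul']
  ring

theorem conj_mul_deriv_eq_of_eventuallyEq_const (hf₁ : DifferentiableAt ℂ f₁ z)
    (hg₁ : DifferentiableAt ℂ g₁ z) (hf₂ : DifferentiableAt ℂ f₂ z)
    (hg₂ : DifferentiableAt ℂ g₂ z)
    (h : (fun w => conj (f₁ w) * g₁ w - conj (f₂ w) * g₂ w) =ᶠ[𝓝 z] fun _ => c) :
    conj (f₁ z) * deriv g₁ z = conj (f₂ z) * deriv g₂ z ∧
      conj (deriv f₁ z) * g₁ z = conj (deriv f₂ z) * g₂ z := by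
  obtain ⟨D₁, hD₁, hD₁v⟩ := exists_hasFDerivAt_conj_mul hf₁.hasDerivAt hg₁.hasDerivAt
  obtain ⟨D₂, hD₂, hD₂v⟩ := exists_hasFDerivAt_conj_mul hf₂.hasDerivAt hg₂.hasDerivAt
  have hD : D₁ - D₂ = 0 :=
    (hD₁.sub hD₂).unique ((hasFDerivAt_const c z).congr_of_eventuallyEq h)
  -- The real derivative is `v ↦ A v + B (conj v)`; `v = 1` and `v = I` separate `A` from `B`.
  have h1 := congr($hD 1)
  have hI := congr($hD I)
  simp only [sub_apply, zero_apply, hD₁v, hD₂v, map_one, conj_I] at h1 hI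
  set A := conj (f₁ z) * deriv g₁ z - conj (f₂ z) * deriv g₂ z
  set B := conj (deriv f₁ z) * g₁ z - conj (deriv f₂ z) * g₂ z
  constructor
  · linear_combination (1 / 2 : ℂ) * h1 - I / 2 * hI + (A - B) / 2 * I_sq
  · linear_combination (1 / 2 : ℂ) * h1 + I / 2 * hI + (B - A) / 2 * I_sq

theorem IsOpen.conj_mul_deriv_eq_of_eqOn_const (hΩ : IsOpen Ω)
    (hf₁ : DifferentiableOn ℂ f₁ Ω) (hg₁ : DifferentiableOn ℂ g₁ Ω)
    (hf₂ : DifferentiableOn ℂ f₂ Ω) (hg₂ : DifferentiableOn ℂ g₂ Ω)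
    (h : ∀ w ∈ Ω, conj (f₁ w) * g₁ w - conj (f₂ w) * g₂ w = c) (hz : z ∈ Ω) :
    conj (f₁ z) * deriv g₁ z = conj (f₂ z) * deriv g₂ z ∧
      conj (deriv f₁ z) * g₁ z = conj (deriv f₂ z) * g₂ z :=
  have hΩz := hΩ.mem_nhds hz
  conj_mul_deriv_eq_of_eventuallyEq_const (hf₁.differentiableAt hΩz)
    (hg₁.differentiableAt hΩz) (hf₂.differentiableAt hΩz) (hg₂.differentiableAt hΩz)
    (eventually_of_mem hΩz h)

theorem eq_zero_of_conj_mul_eq {a b a' b' : ℂ} (hab : ‖b‖ < ‖a‖)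
    (h : conj a * a' = conj b * b') (h' : conj a' * a' = conj b' * b') : a' = 0 ∧ b' = 0 := by
  have hnorm : ‖a'‖ = ‖b'‖ := by
    simpa [norm_mul, Complex.norm_conj, ← sq] using congr(‖$h'‖)
  have hprod : ‖a‖ * ‖a'‖ = ‖b‖ * ‖a'‖ := by
    simpa [norm_mul, Complex.norm_conj, hnorm] using congr(‖$h‖)
  have ha' : ‖a'‖ = 0 := by nlinarith [norm_nonneg a']
  exact ⟨norm_eq_zero.mp ha', norm_eq_zero.mp (hnorm ▸ ha')⟩

theorem constant_dilatation_case_general {Ω : Set ℂ} (hΩo : IsOpen Ω) (hΩc : IsConnected Ω)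
    (q₁ m₁ m₂ : ℂ → ℂ)
    (hm₁ : DifferentiableOn ℂ m₁ Ω) (hm₂ : DifferentiableOn ℂ m₂ Ω)
    (hq₁bnd : ∀ z ∈ Ω, 0 < ‖q₁ z‖ ∧ ‖q₁ z‖ < 1)
    (hrel : ∀ z ∈ Ω, ‖m₁ z‖ ^ 2 - ‖m₂ z‖ ^ 2
      = 1 - ‖q₁ z‖ ^ 2)
    (c₀ : ℂ) (hqconst : ∀ z ∈ Ω, q₁ z = c₀) :
    (∃ a : ℂ, ∀ z ∈ Ω, m₁ z = a) ∧ (∃ b : ℂ, ∀ z ∈ Ω, m₂ z = b) := by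
  have hm₁' := (hm₁.analyticOnNhd hΩo).deriv.differentiableOn
  have hm₂' := (hm₂.analyticOnNhd hΩo).deriv.differentiableOn
  have hconst : ∀ z ∈ Ω, conj (m₁ z) * m₁ z - conj (m₂ z) * m₂ z = (1 - ‖c₀‖ ^ 2 : ℝ) := by
    intro z hz
    simp only [conj_mul', ← ofReal_pow, ← ofReal_sub, hrel z hz, hqconst z hz]
  have hderiv z (hz : z ∈ Ω) : conj (m₁ z) * deriv m₁ z = conj (m₂ z) * deriv m₂ z :=
    (hΩo.conj_mul_deriv_eq_of_eqOn_const hm₁ hm₁ hm₂ hm₂ hconst hz).1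
  have hderiv_sq z (hz : z ∈ Ω) :
      conj (deriv m₁ z) * deriv m₁ z = conj (deriv m₂ z) * deriv m₂ z :=
    (hΩo.conj_mul_deriv_eq_of_eqOn_const (c := 0) hm₁ hm₁' hm₂ hm₂'
      (fun w hw => sub_eq_zero.mpr (hderiv w hw)) hz).2
  have hlt z (hz : z ∈ Ω) : ‖m₂ z‖ < ‖m₁ z‖ := by
    nlinarith [hrel z hz, (hq₁bnd z hz).2, norm_nonneg (m₁ z), norm_nonneg (m₂ z),
      norm_nonneg (q₁ z)]
  have hzero z (hz : z ∈ Ω) := eq_zero_of_conj_mul_eq (hlt z hz) (hderiv z hz) (hderiv_sq z hz)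
  exact ⟨hΩo.exists_is_const_of_deriv_eq_zero hΩc.isPreconnected hm₁ fun z hz => (hzero z hz).1,
    hΩo.exists_is_const_of_deriv_eq_zero hΩc.isPreconnected hm₂ fun z hz => (hzero z hz).2⟩

/-- If `q₁` is the nonzero constant `c₀` on the connected open set `Ω`, `m₁, m₂`
are holomorphic with `m₁` nonvanishing and `|m₁|² − |m₂|² = 1 − |q₁|²` on `Ω`,
then `m₁` and `m₂` are both constant. -/
theorem constant_dilatation_case {Ω : Set ℂ} (hΩo : IsOpen Ω) (hΩc : IsConnected Ω)
    (q₁ m₁ m₂ : ℂ → ℂ)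
    (hq₁ : DifferentiableOn ℂ q₁ Ω)
    (hm₁ : DifferentiableOn ℂ m₁ Ω) (hm₂ : DifferentiableOn ℂ m₂ Ω)
    (hq₁bnd : ∀ z ∈ Ω, 0 < ‖q₁ z‖ ∧ ‖q₁ z‖ < 1)
    (hm₁ne : ∀ z ∈ Ω, m₁ z ≠ 0)
    (hrel : ∀ z ∈ Ω, ‖m₁ z‖ ^ 2 - ‖m₂ z‖ ^ 2
      = 1 - ‖q₁ z‖ ^ 2)
    (c₀ : ℂ) (hc₀ : c₀ ≠ 0) (hqconst : ∀ z ∈ Ω, q₁ z = c₀) :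
    (∃ a : ℂ, ∀ z ∈ Ω, m₁ z = a) ∧ (∃ b : ℂ, ∀ z ∈ Ω, m₂ z = b) :=
  constant_dilatation_case_general hΩo hΩc q₁ m₁ m₂ hm₁ hm₂ hq₁bnd hrel c₀ hqconst
end
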